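/- arXiv:2311.06412 — 4 statements merged into one kernel-verified Lean document; each statement's English description precedes it below -/
import Mathlib

section
/- Let P be a superuniform random variable (P(P ≤ s) ≤ s for all s ∈ [0,1]) that may be arbitrarily dependent on a strictly positive random variable R. Let U be a superuniform random variable independent of the pair (P, R), let c ≥ 0 be a constant, and let β be a reshaping function. Then E[ 1{P ≤ c·β(R/U)} / R ] ≤ c. -/
open MeasureTheory ProbabilityTheory Set
open scoped ENNReal

/-! Given `(P, R)`, the event `P ≤ c β(R/U)` says that `R/U` lies in an upper set, so `U` is at
most `R` times the length `L(P)` of `{t > 0 | P ≤ c β(t⁻¹)}`; superuniformity of `U` makes the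
conditional expectation at most `L(P)`. By Tonelli, `𝔼[L(P)] = ∫₀^∞ ℙ(P ≤ c β(t⁻¹)) dt`, which
superuniformity of `P` bounds by `c ∫₀^∞ β(t⁻¹) dt = c ν((0, ∞)) ≤ c`. -/

variable {Ω : Type*} [MeasurableSpace Ω]

def Superuniform (μ : Measure Ω) (X : Ω → ℝ) : Prop :=
  ∀ s ∈ Icc (0 : ℝ) 1, μ {ω | X ω ≤ s} ≤ ENNReal.ofReal s

namespace Superuniform

variable {μ : Measure Ω} [IsProbabilityMeasure μ] {X : Ω → ℝ}

theorem measure_le_ofReal (hX : Superuniform μ X) (a : ℝ) :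
    μ {ω | X ω ≤ a} ≤ ENNReal.ofReal a := by
  rcases lt_or_ge a 0 with ha | ha
  · calc μ {ω | X ω ≤ a} ≤ μ {ω | X ω ≤ 0} := measure_mono fun ω h => le_trans h ha.le
      _ ≤ ENNReal.ofReal 0 := hX 0 ⟨le_rfl, zero_le_one⟩
      _ = ENNReal.ofReal a := by rw [ENNReal.ofReal_zero, ENNReal.ofReal_of_nonpos ha.le]
  rcases le_or_gt a 1 with ha1 | ha1
  · exact hX a ⟨ha, ha1⟩
  · exact prob_le_one.trans (ENNReal.one_le_ofReal.2 ha1.le)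

/-- If `r / X ∈ S` for an upper set `S`, then `X / r` is at most the length of the interval
`{t > 0 | t⁻¹ ∈ S}`. -/
theorem measure_div_mem_le (hX : Superuniform μ X) {S : Set ℝ} (hS : IsUpperSet S) {r : ℝ}
    (hr : 0 < r) :
    μ {ω | r / X ω ∈ S} ≤ ENNReal.ofReal r * volume.restrict (Ioi 0) {t | t⁻¹ ∈ S} := by
  set τ := volume.restrict (Ioi 0) {t : ℝ | t⁻¹ ∈ S}
  obtain hτ | hτ := eq_or_ne τ ∞
  · simp [hτ, hr]
  have hsub : {ω | r / X ω ∈ S} ⊆ {ω | X ω ≤ r * τ.toReal} := by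
    intro ω hω
    rcases le_or_gt (X ω) 0 with hX0 | hX0
    · exact hX0.trans (by positivity)
    have hIoc : Ioc 0 (X ω / r) ⊆ {t | t⁻¹ ∈ S} ∩ Ioi 0 := fun t ht =>
      ⟨hS (by simpa using inv_anti₀ ht.1 ht.2) hω, ht.1⟩
    have hlen : ENNReal.ofReal (X ω / r) ≤ τ :=
      calc ENNReal.ofReal (X ω / r) = volume (Ioc 0 (X ω / r)) := by simp
        _ ≤ volume ({t | t⁻¹ ∈ S} ∩ Ioi 0) := measure_mono hIoc
        _ ≤ τ := Measure.le_restrict_apply _ _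
    have := (ENNReal.ofReal_le_iff_le_toReal hτ).1 hlen
    rwa [div_le_iff₀ hr, mul_comm] at this
  calc μ {ω | r / X ω ∈ S} ≤ μ {ω | X ω ≤ r * τ.toReal} := measure_mono hsub
    _ ≤ ENNReal.ofReal (r * τ.toReal) := hX.measure_le_ofReal _
    _ = ENNReal.ofReal r * τ := by rw [ENNReal.ofReal_mul hr.le, ENNReal.ofReal_toReal hτ]

theorem lintegral_indicator_div_mem_le (hX : Superuniform μ X) {S : Set ℝ} (hS : IsUpperSet S)
    {r : ℝ} (hr : 0 < r) :
    ∫⁻ ω, {ω | r / X ω ∈ S}.indicator (fun _ => ENNReal.ofReal r⁻¹) ω ∂μ ≤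
      volume.restrict (Ioi 0) {t | t⁻¹ ∈ S} :=
  calc ∫⁻ ω, {ω | r / X ω ∈ S}.indicator (fun _ => ENNReal.ofReal r⁻¹) ω ∂μ
      ≤ ENNReal.ofReal r⁻¹ * μ {ω | r / X ω ∈ S} := lintegral_indicator_const_le _ _
    _ ≤ ENNReal.ofReal r⁻¹ * (ENNReal.ofReal r * volume.restrict (Ioi 0) {t | t⁻¹ ∈ S}) := by
        gcongr; exact hX.measure_div_mem_le hS hr
    _ = volume.restrict (Ioi 0) {t | t⁻¹ ∈ S} := by
        rw [← mul_assoc, ← ENNReal.ofReal_mul (inv_nonneg.2 hr.le), inv_mul_cancel₀ hr.ne',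
          ENNReal.ofReal_one, one_mul]

end Superuniform

theorem ProbabilityTheory.IndepFun.lintegral_comp_eq_lintegral_lintegral {α β : Type*}
    [MeasurableSpace α] [MeasurableSpace β] {μ : Measure Ω} [IsFiniteMeasure μ]
    {X : Ω → α} {Y : Ω → β} (hXY : IndepFun X Y μ) (hX : Measurable X) (hY : Measurable Y)
    {F : α → β → ℝ≥0∞} (hF : Measurable (Function.uncurry F)) :
    ∫⁻ ω, F (X ω) (Y ω) ∂μ = ∫⁻ ω, ∫⁻ ω', F (X ω') (Y ω) ∂μ ∂μ := by
  calc ∫⁻ ω, F (X ω) (Y ω) ∂μ = ∫⁻ z, Function.uncurry F z ∂(μ.map fun ω => (X ω, Y ω)) :=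
        (lintegral_map hF (hX.prodMk hY)).symm
    _ = ∫⁻ y, ∫⁻ x, F x y ∂(μ.map X) ∂(μ.map Y) := by
        rw [hXY.map_prod_eq_prod_map_map hX.aemeasurable hY.aemeasurable,
          lintegral_prod_symm' _ hF]
        rfl
    _ = ∫⁻ ω, ∫⁻ ω', F (X ω') (Y ω) ∂μ ∂μ := by
        rw [lintegral_map (f := fun y => ∫⁻ x, F x y ∂(μ.map X)) hF.lintegral_prod_left' hY]
        refine lintegral_congr fun ω => ?_
        exact lintegral_map (hF.comp (measurable_id.prodMk measurable_const)) hX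

noncomputable def reshaping (ν : Measure ℝ) (r : ℝ) : ℝ := ∫ x in Icc 0 r, x ∂ν

section Reshaping

variable {ν : Measure ℝ} [IsFiniteMeasureOnCompacts ν]

theorem integrableOn_id_Icc (a b : ℝ) : IntegrableOn (fun x => x) (Icc a b) ν :=
  continuous_id.continuousOn.integrableOn_compact isCompact_Icc

theorem reshaping_mono : Monotone (reshaping ν) := fun _ b hab =>
  setIntegral_mono_set (integrableOn_id_Icc 0 b)
    ((ae_restrict_iff' measurableSet_Icc).2 (ae_of_all _ fun _ hx => hx.1))
    (Icc_subset_Icc_right hab).eventuallyLE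

theorem ofReal_reshaping (r : ℝ) :
    ENNReal.ofReal (reshaping ν r) = ∫⁻ x in Icc 0 r, ENNReal.ofReal x ∂ν :=
  ofReal_integral_eq_lintegral_ofReal (integrableOn_id_Icc 0 r)
    ((ae_restrict_iff' measurableSet_Icc).2 (ae_of_all _ fun _ hx => hx.1))

end Reshaping

theorem lintegral_Ioi_indicator_Icc_inv (x : ℝ) :
    ∫⁻ t in Ioi 0, (Icc 0 t⁻¹).indicator ENNReal.ofReal x = (Ioi 0).indicator 1 x := by
  rcases le_or_gt x 0 with hx | hx
  · have h0 : ∀ t : ℝ, (Icc 0 t⁻¹).indicator ENNReal.ofReal x = 0 := fun t =>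
      indicator_apply_eq_zero.2 fun _ => ENNReal.ofReal_of_nonpos hx
    simp [h0, hx]
  have hcongr : EqOn (fun t : ℝ => (Icc 0 t⁻¹).indicator ENNReal.ofReal x)
      ((Iic x⁻¹).indicator fun _ => ENNReal.ofReal x) (Ioi 0) := fun t ht => by
    simp [indicator_apply, hx.le, le_inv_comm₀ hx ht]
  rw [setLIntegral_congr_fun measurableSet_Ioi hcongr, lintegral_indicator_const measurableSet_Iic,
    Measure.restrict_apply measurableSet_Iic, Iic_inter_Ioi, Real.volume_Ioc, sub_zero,
    ← ENNReal.ofReal_mul hx.le, mul_inv_cancel₀ hx.ne', ENNReal.ofReal_one]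
  simp [hx]

/-- Each `x > 0` contributes `x` times the length of `(0, x⁻¹]`, that is `1`. -/
theorem lintegral_ofReal_reshaping_inv (ν : Measure ℝ) [IsFiniteMeasureOnCompacts ν] :
    ∫⁻ t in Ioi 0, ENNReal.ofReal (reshaping ν t⁻¹) = ν (Ioi 0) := by
  have hmeas : Measurable fun z : ℝ × ℝ => (Icc 0 z.1⁻¹).indicator ENNReal.ofReal z.2 :=
    measurable_snd.ennreal_ofReal.indicator (s := {z : ℝ × ℝ | z.2 ∈ Icc 0 z.1⁻¹})
      ((measurableSet_le measurable_const measurable_snd).inter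
        (measurableSet_le measurable_snd measurable_fst.inv))
  calc ∫⁻ t in Ioi 0, ENNReal.ofReal (reshaping ν t⁻¹)
      = ∫⁻ t in Ioi 0, ∫⁻ x, (Icc 0 t⁻¹).indicator ENNReal.ofReal x ∂ν := by
        simp_rw [ofReal_reshaping, lintegral_indicator measurableSet_Icc]
    _ = ∫⁻ x, (∫⁻ t in Ioi 0, (Icc 0 t⁻¹).indicator ENNReal.ofReal x) ∂ν :=
        lintegral_lintegral_swap hmeas.aemeasurable
    _ = ν (Ioi 0) := by
        simp_rw [lintegral_Ioi_indicator_Icc_inv]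
        exact lintegral_indicator_one measurableSet_Ioi

theorem randomized_superuniformity_lemma_general (μ : Measure Ω) [IsProbabilityMeasure μ]
    (P R U : Ω → ℝ) (hPm : Measurable P) (hRm : Measurable R) (hUm : Measurable U)
    (hPsu : ∀ s ∈ Set.Icc (0 : ℝ) 1, μ {ω | P ω ≤ s} ≤ ENNReal.ofReal s)
    (hRpos : ∀ ω, 0 < R ω)
    (hUsu : ∀ s ∈ Set.Icc (0 : ℝ) 1, μ {ω | U ω ≤ s} ≤ ENNReal.ofReal s)
    (hindep : IndepFun U (fun ω => (P ω, R ω)) μ)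
    (c : ℝ) (hc : 0 ≤ c)
    (ν : Measure ℝ) [IsProbabilityMeasure ν]
    (β : ℝ → ℝ) (hβ : ∀ r, β r = ∫ x in Set.Icc (0 : ℝ) r, x ∂ν) :
    ∫⁻ ω, (if P ω ≤ c * β (R ω / U ω) then ENNReal.ofReal (1 / R ω) else 0) ∂μ ≤
      ENNReal.ofReal c := by
  obtain rfl : β = reshaping ν := funext hβ
  set F : ℝ → ℝ × ℝ → ℝ≥0∞ := fun u q =>
    if q.1 ≤ c * reshaping ν (q.2 / u) then ENNReal.ofReal (1 / q.2) else 0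
  have hβm : Measurable (reshaping ν) := reshaping_mono.measurable
  have hF : Measurable (Function.uncurry F) :=
    Measurable.ite (measurableSet_le (by fun_prop) (by fun_prop)) (by fun_prop) measurable_const
  have hE : MeasurableSet {z : Ω × ℝ | P z.1 ≤ c * reshaping ν z.2⁻¹} :=
    measurableSet_le (by fun_prop) (by fun_prop)
  have hinner : ∀ ω, ∫⁻ ω', F (U ω') (P ω, R ω) ∂μ ≤
      volume.restrict (Ioi 0) {t | P ω ≤ c * reshaping ν t⁻¹} := fun ω => by
    have hS : IsUpperSet {x | P ω ≤ c * reshaping ν x} := fun _ _ hxy hx =>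
      hx.trans (mul_le_mul_of_nonneg_left (reshaping_mono hxy) hc)
    simpa only [F, indicator_apply, mem_ofPred_eq, one_div] using
      Superuniform.lintegral_indicator_div_mem_le hUsu hS (hRpos ω)
  calc ∫⁻ ω, F (U ω) (P ω, R ω) ∂μ = ∫⁻ ω, ∫⁻ ω', F (U ω') (P ω, R ω) ∂μ ∂μ :=
        hindep.lintegral_comp_eq_lintegral_lintegral hUm (hPm.prodMk hRm) hF
    _ ≤ ∫⁻ ω, volume.restrict (Ioi 0) {t | P ω ≤ c * reshaping ν t⁻¹} ∂μ := lintegral_mono hinner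
    _ = ∫⁻ t in Ioi 0, μ {ω | P ω ≤ c * reshaping ν t⁻¹} :=
        (Measure.prod_apply hE).symm.trans (Measure.prod_apply_symm hE)
    _ ≤ ∫⁻ t in Ioi 0, ENNReal.ofReal c * ENNReal.ofReal (reshaping ν t⁻¹) :=
        lintegral_mono fun _ =>
          (Superuniform.measure_le_ofReal hPsu _).trans_eq (ENNReal.ofReal_mul hc)
    _ = ENNReal.ofReal c * ν (Ioi 0) := by
        rw [lintegral_const_mul' _ _ ENNReal.ofReal_ne_top, lintegral_ofReal_reshaping_inv]
    _ ≤ ENNReal.ofReal c := mul_le_of_le_one_right' prob_le_one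

/-- **Randomized superuniformity lemma (Lemma 1 of Xu–Ramdas).** Let `P` be a
superuniform random variable arbitrarily dependent on a strictly positive random
variable `R`, let `U` be superuniform and independent of the pair `(P, R)`, let
`c ≥ 0`, and let `β` be a reshaping function. Then
`𝔼[ 1{P ≤ c·β(R/U)} / R ] ≤ c`. -/
theorem randomized_superuniformity_lemma (μ : Measure Ω) [IsProbabilityMeasure μ]
    (P R U : Ω → ℝ) (hPm : Measurable P) (hRm : Measurable R) (hUm : Measurable U)
    (hPsu : ∀ s ∈ Set.Icc (0 : ℝ) 1, μ {ω | P ω ≤ s} ≤ ENNReal.ofReal s)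
    (hRpos : ∀ ω, 0 < R ω)
    (hUsu : ∀ s ∈ Set.Icc (0 : ℝ) 1, μ {ω | U ω ≤ s} ≤ ENNReal.ofReal s)
    (hindep : IndepFun U (fun ω => (P ω, R ω)) μ)
    (c : ℝ) (hc : 0 ≤ c)
    (ν : Measure ℝ) [IsProbabilityMeasure ν] (hν : ν (Set.Iio 0) = 0)
    (β : ℝ → ℝ) (hβ : ∀ r, β r = ∫ x in Set.Icc (0 : ℝ) r, x ∂ν) :
    ∫⁻ ω, (if P ω ≤ c * β (R ω / U ω) then ENNReal.ofReal (1 / R ω) else 0) ∂μ ≤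
      ENNReal.ofReal c :=
  randomized_superuniformity_lemma_general μ P R U hPm hRm hUm hPsu hRpos hUsu hindep c hc ν β hβ
end

section
/- Let E be a nonnegative random variable with E[E] ≤ 1, let α̂ be a random variable with values in (0, 1] that may depend arbitrarily on E, and let U be uniformly distributed on [0,1] and independent of the pair (E, α̂). Define the randomized e-value S = max( E·1{E ≥ 1/α̂}, (1/α̂)·1{U ≤ E·α̂} ). Then E[S] ≤ 1, i.e., S is again an e-value. -/
/-!
Split on the event `{E ≥ 1/α̂}`. There `S = E`. Off it, `E·α̂ < 1` and `S = (1/α̂)·1{U ≤ E·α̂}`;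
conditionally on `(E, α̂)` the uniform threshold `U` falls below `E·α̂` with probability `E·α̂`,
so this part contributes `𝔼[E·1{E < 1/α̂}]`. Hence `𝔼[S] ≤ 𝔼[E] ≤ 1`.
-/

open MeasureTheory ProbabilityTheory Set
open scoped ENNReal

variable {Ω : Type*} [MeasurableSpace Ω]

section Independence

variable {α β : Type*} [MeasurableSpace α] [MeasurableSpace β]
  {μ : Measure Ω} [IsFiniteMeasure μ] {X : Ω → α} {Y : Ω → β}

theorem ProbabilityTheory.IndepFun.lintegral_comp_eq_lintegral_lintegral_map
    (hindep : IndepFun X Y μ) (hX : Measurable X) (hY : Measurable Y)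
    {f : α × β → ℝ≥0∞} (hf : Measurable f) :
    ∫⁻ ω, f (X ω, Y ω) ∂μ = ∫⁻ ω, ∫⁻ x, f (x, Y ω) ∂(μ.map X) ∂μ := by
  have hmap : μ.map (fun ω ↦ (X ω, Y ω)) = (μ.map X).prod (μ.map Y) :=
    (indepFun_iff_map_prod_eq_prod_map_map hX.aemeasurable hY.aemeasurable).mp hindep
  calc ∫⁻ ω, f (X ω, Y ω) ∂μ
      = ∫⁻ z, f z ∂(μ.map X).prod (μ.map Y) := by
        rw [← hmap, lintegral_map hf (hX.prodMk hY)]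
    _ = ∫⁻ y, ∫⁻ x, f (x, y) ∂(μ.map X) ∂(μ.map Y) := lintegral_prod_symm' f hf
    _ = ∫⁻ ω, ∫⁻ x, f (x, Y ω) ∂(μ.map X) ∂μ :=
        lintegral_map (Measurable.lintegral_prod_left' hf) hY

end Independence

theorem volume_restrict_Icc_zero_one_Iic_le (p : ℝ) :
    (volume.restrict (Icc (0 : ℝ) 1)) (Iic p) ≤ ENNReal.ofReal p := by
  rw [Measure.restrict_apply measurableSet_Iic]
  calc volume (Iic p ∩ Icc 0 1) ≤ volume (Icc 0 p) := measure_mono fun u ⟨hup, hu0, _⟩ ↦ ⟨hu0, hup⟩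
    _ = ENNReal.ofReal p := by rw [Real.volume_Icc, sub_zero]

theorem lintegral_mul_ite_uniform_le {β : Type*} [MeasurableSpace β] {μ : Measure Ω}
    [IsFiniteMeasure μ] {U : Ω → ℝ} {W : Ω → β} (hU : Measurable U) (hW : Measurable W)
    (hUunif : μ.map U = volume.restrict (Icc 0 1)) (hindep : IndepFun U W μ)
    {c : β → ℝ≥0∞} {p : β → ℝ} (hc : Measurable c) (hp : Measurable p) :
    ∫⁻ ω, c (W ω) * (if U ω ≤ p (W ω) then 1 else 0) ∂μ
      ≤ ∫⁻ ω, c (W ω) * ENNReal.ofReal (p (W ω)) ∂μ := by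
  have hf : Measurable fun z : ℝ × β ↦ c z.2 * (if z.1 ≤ p z.2 then 1 else 0) :=
    (hc.comp measurable_snd).mul <| Measurable.ite
      (measurableSet_le measurable_fst (hp.comp measurable_snd)) measurable_const measurable_const
  rw [hindep.lintegral_comp_eq_lintegral_lintegral_map hU hW hf, hUunif]
  refine lintegral_mono fun ω ↦ ?_
  have hind (u : ℝ) : (if u ≤ p (W ω) then (1 : ℝ≥0∞) else 0) = (Iic (p (W ω))).indicator 1 u := by
    simp [indicator_apply]
  simp_rw [hind]
  rw [lintegral_const_mul _ (measurable_one.indicator measurableSet_Iic),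
    lintegral_indicator_one measurableSet_Iic]
  gcongr; exact volume_restrict_Icc_zero_one_Iic_le _

theorem ofReal_stochasticRound_le {e a u : ℝ} (ha : 0 < a) :
    ENNReal.ofReal (max (e * (if 1 / a ≤ e then 1 else 0)) ((1 / a) * (if u ≤ e * a then 1 else 0)))
      ≤ (if 1 / a ≤ e then ENNReal.ofReal e else 0)
        + (if e < 1 / a then ENNReal.ofReal (1 / a) else 0) * (if u ≤ e * a then 1 else 0) := by
  split_ifs <;> first | linarith | simp_all

theorem ite_lt_inv_mul_ofReal_mul {e a : ℝ} (ha : 0 < a) :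
    (if e < 1 / a then ENNReal.ofReal (1 / a) else 0) * ENNReal.ofReal (e * a)
      = if e < 1 / a then ENNReal.ofReal e else 0 := by
  split_ifs
  · rw [← ENNReal.ofReal_mul (by positivity)]
    field_simp
  · exact zero_mul _

theorem stochastic_rounding_evalue_general (μ : Measure Ω) [IsProbabilityMeasure μ]
    (E : Ω → ℝ) (hEm : Measurable E)
    (hE1 : ∫⁻ ω, ENNReal.ofReal (E ω) ∂μ ≤ 1)
    (αhat : Ω → ℝ) (hαm : Measurable αhat) (hα : ∀ ω, αhat ω ∈ Set.Ioc (0 : ℝ) 1)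
    (U : Ω → ℝ) (hUm : Measurable U)
    (hUunif : μ.map U = (volume : Measure ℝ).restrict (Set.Icc 0 1))
    (hindep : IndepFun U (fun ω => (E ω, αhat ω)) μ) :
    ∫⁻ ω, ENNReal.ofReal
        (max (E ω * (if 1 / αhat ω ≤ E ω then 1 else 0))
          ((1 / αhat ω) * (if U ω ≤ E ω * αhat ω then 1 else 0))) ∂μ ≤ 1 := by
  have hα0 (ω : Ω) : 0 < αhat ω := (hα ω).1
  have hlarge : Measurable fun ω ↦ if 1 / αhat ω ≤ E ω then ENNReal.ofReal (E ω) else 0 :=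
    Measurable.ite (measurableSet_le (measurable_const.div hαm) hEm) hEm.ennreal_ofReal
      measurable_const
  have hsmall : Measurable fun w : ℝ × ℝ ↦ if w.1 < 1 / w.2 then ENNReal.ofReal (1 / w.2) else 0 :=
    Measurable.ite (measurableSet_lt measurable_fst (measurable_const.div measurable_snd))
      (measurable_const.div measurable_snd).ennreal_ofReal measurable_const
  calc _ ≤ ∫⁻ ω, (if 1 / αhat ω ≤ E ω then ENNReal.ofReal (E ω) else 0)
          + (if E ω < 1 / αhat ω then ENNReal.ofReal (1 / αhat ω) else 0)
            * (if U ω ≤ E ω * αhat ω then 1 else 0) ∂μ :=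
        lintegral_mono fun ω ↦ ofReal_stochasticRound_le (hα0 ω)
    _ ≤ ∫⁻ ω, (if 1 / αhat ω ≤ E ω then ENNReal.ofReal (E ω) else 0)
          + (if E ω < 1 / αhat ω then ENNReal.ofReal (1 / αhat ω) else 0)
            * ENNReal.ofReal (E ω * αhat ω) ∂μ := by
        rw [lintegral_add_left hlarge, lintegral_add_left hlarge]
        gcongr 1
        exact lintegral_mul_ite_uniform_le hUm (hEm.prodMk hαm) hUunif hindep hsmall
          (measurable_fst.mul measurable_snd)
    _ = ∫⁻ ω, ENNReal.ofReal (E ω) ∂μ := by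
        refine lintegral_congr fun ω ↦ ?_
        rw [ite_lt_inv_mul_ofReal_mul (hα0 ω)]
        split_ifs <;> first | linarith | simp
    _ ≤ 1 := hE1

/-- **Stochastic rounding preserves e-values (Proposition 2 of Xu–Ramdas).**
Let `E` be a nonnegative random variable with `𝔼[E] ≤ 1`, let `α̂` take values in
`(0,1]` and be arbitrarily dependent on `E`, and let `U` be uniform on `[0,1]` and
independent of the pair `(E, α̂)`. Then the randomized e-value
`S = max( E·1{E ≥ 1/α̂}, (1/α̂)·1{U ≤ E·α̂} )` satisfies `𝔼[S] ≤ 1`. -/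
theorem stochastic_rounding_evalue (μ : Measure Ω) [IsProbabilityMeasure μ]
    (E : Ω → ℝ) (hEm : Measurable E) (hE0 : ∀ ω, 0 ≤ E ω)
    (hE1 : ∫⁻ ω, ENNReal.ofReal (E ω) ∂μ ≤ 1)
    (αhat : Ω → ℝ) (hαm : Measurable αhat) (hα : ∀ ω, αhat ω ∈ Set.Ioc (0 : ℝ) 1)
    (U : Ω → ℝ) (hUm : Measurable U)
    (hUunif : μ.map U = (volume : Measure ℝ).restrict (Set.Icc 0 1))
    (hindep : IndepFun U (fun ω => (E ω, αhat ω)) μ) :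
    ∫⁻ ω, ENNReal.ofReal
        (max (E ω * (if 1 / αhat ω ≤ E ω then 1 else 0))
          ((1 / αhat ω) * (if U ω ≤ E ω * αhat ω then 1 else 0))) ∂μ ≤ 1 :=
  stochastic_rounding_evalue_general μ E hEm hE1 αhat hαm hα U hUm hUunif hindep
end

section
/- Let E ≥ 0 and α̂ ∈ (0, 1] be real numbers and let u ∈ (0, 1]. Define S = max( E·1{E ≥ 1/α̂}, (1/α̂)·1{u ≤ E·α̂} ). Then S ≥ 1/α̂ if and only if E ≥ u/α̂. In particular, rejecting when the stochastically-rounded e-value S exceeds 1/α̂ is equivalent to rejecting when E exceeds the randomized threshold u/α̂. -/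
/-! If `E ≥ 1/α̂` then `E·α̂ ≥ 1 ≥ u`, so the deterministic branch of the rounding can only reach
`1/α̂` when the randomized one does, and `S ≥ 1/α̂` reduces to `u ≤ E·α̂`. -/

section Rounding

variable {M : Type*} [MulZeroOneClass M] [LinearOrder M]

theorem le_mul_ite_self_iff {c E : M} (hc : 0 < c) :
    c ≤ E * (if c ≤ E then 1 else 0) ↔ c ≤ E := by
  split_ifs with h
  · simp [h]
  · simpa [h] using hc

theorem le_mul_ite_iff {c : M} {q : Prop} [Decidable q] (hc : 0 < c) :
    c ≤ c * (if q then 1 else 0) ↔ q := by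
  split_ifs with h
  · simpa using h
  · simpa [h] using hc.not_ge

theorem le_max_rounding_iff {c E : M} {q : Prop} [Decidable q] (hc : 0 < c) (hq : c ≤ E → q) :
    c ≤ max (E * (if c ≤ E then 1 else 0)) (c * (if q then 1 else 0)) ↔ q := by
  rw [le_max_iff, le_mul_ite_self_iff hc, le_mul_ite_iff hc]
  exact ⟨fun h => h.elim hq id, Or.inr⟩

end Rounding

theorem stochastic_rounding_rejection_iff_general
    (E αhat u : ℝ) (hα0 : 0 < αhat)
    (hu1 : u ≤ 1) :
    1 / αhat ≤ max (E * (if 1 / αhat ≤ E then 1 else 0))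
        ((1 / αhat) * (if u ≤ E * αhat then 1 else 0)) ↔ u / αhat ≤ E := by
  have hdet_imp_rand : 1 / αhat ≤ E → u ≤ E * αhat := fun h =>
    hu1.trans ((div_le_iff₀ hα0).mp h)
  rw [le_max_rounding_iff (one_div_pos.mpr hα0) hdet_imp_rand, div_le_iff₀ hα0]

/-- **Rejection by the stochastically rounded e-value is rejection at a randomized
threshold.** For `E ≥ 0`, `α̂ ∈ (0,1]`, and `u ∈ (0,1]`, the stochastically rounded
e-value `S = max( E·1{E ≥ 1/α̂}, (1/α̂)·1{u ≤ E·α̂} )` satisfies `S ≥ 1/α̂` if and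
only if `E ≥ u/α̂`. -/
theorem stochastic_rounding_rejection_iff
    (E αhat u : ℝ) (hE : 0 ≤ E) (hα0 : 0 < αhat) (hα1 : αhat ≤ 1)
    (hu0 : 0 < u) (hu1 : u ≤ 1) :
    1 / αhat ≤ max (E * (if 1 / αhat ≤ E then 1 else 0))
        ((1 / αhat) * (if u ≤ E * αhat then 1 else 0)) ↔ u / αhat ≤ E :=
  stochastic_rounding_rejection_iff_general E αhat u hα0 hu1
end

section
/- Fix a level α ∈ [0,1], a discount sequence (γ_t)_{t≥1}, and a horizon t ∈ ℕ. Let p_1, …, p_t and q_1, …, q_t be real numbers in [0,1] with p_j ≤ q_j for all j ≤ t. Let (R_j(p)) and (R_j(q)) be the LOND discovery sets applied to the two sequences: R_0 = ∅, threshold α_j = α·γ_j·(|R_{j-1}|+1), and R_j = R_{j-1} ∪ {j} iff the j-th value is ≤ α_j. Then R_j(q) ⊆ R_j(p) for every j ≤ t; in particular |R_j(q)| ≤ |R_j(p)| and every LOND threshold for the p-sequence is at least the corresponding threshold for the q-sequence. -/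
/-!
Induction on `j`: once `R_{j-1}(q) ⊆ R_{j-1}(p)`, the `p`-threshold at step `j` is at least the
`q`-threshold, so whenever `q_j` is rejected, so is `p_j ≤ q_j`.
-/

/-- The LOND discovery sets applied to a deterministic sequence of values:
`R 0 = ∅`, threshold `α_j = α·γ_j·(|R_{j-1}|+1)`, and `R_j = R_{j-1} ∪ {j}` iff the
`j`-th value is at most `α_j`. -/
noncomputable def LONDsets (α : ℝ) (γ : ℕ → ℝ) (p : ℕ → ℝ) : ℕ → Finset ℕ
  | 0 => ∅
  | j + 1 =>
    let R := LONDsets α γ p j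
    if p (j + 1) ≤ α * γ (j + 1) * ((R.card : ℝ) + 1) then insert (j + 1) R else R

open Finset

section
variable {α : ℝ} {γ : ℕ → ℝ}

theorem LOND_threshold_mono {j : ℕ} (hα : 0 ≤ α) (hγ : 0 ≤ γ j) {R S : Finset ℕ} (h : R ⊆ S) :
    α * γ j * ((R.card : ℝ) + 1) ≤ α * γ j * ((S.card : ℝ) + 1) :=
  mul_le_mul_of_nonneg_left (by gcongr) (mul_nonneg hα hγ)

theorem LONDsets_succ_subset {p q : ℕ → ℝ} {n : ℕ} (hα : 0 ≤ α) (hγ : 0 ≤ γ (n + 1))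
    (hpq : p (n + 1) ≤ q (n + 1)) (h : LONDsets α γ q n ⊆ LONDsets α γ p n) :
    LONDsets α γ q (n + 1) ⊆ LONDsets α γ p (n + 1) := by
  simp only [LONDsets]
  split_ifs with hq hp
  · exact insert_subset_insert _ h
  · exact absurd (hpq.trans (hq.trans (LOND_threshold_mono hα hγ h))) hp
  · exact h.trans (subset_insert _ _)
  · exact h

theorem LONDsets_subset_of_le {p q : ℕ → ℝ} {t : ℕ} (hα : 0 ≤ α) (hγ : ∀ j ≤ t, 0 ≤ γ j)
    (hpq : ∀ j ≤ t, p j ≤ q j) : ∀ j ≤ t, LONDsets α γ q j ⊆ LONDsets α γ p j := by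
  intro j hj
  induction j with
  | zero => exact empty_subset _
  | succ n ih => exact LONDsets_succ_subset hα (hγ _ hj) (hpq _ hj) (ih (by omega))

end

theorem LOND_monotone_general
    (α : ℝ) (hα0 : 0 ≤ α)
    (γ : ℕ → ℝ) (hγ0 : ∀ t, 0 ≤ γ t)
    (t : ℕ) (p q : ℕ → ℝ)
    (hpq : ∀ j, j ≤ t → p j ≤ q j) :
    ∀ j, j ≤ t →
      LONDsets α γ q j ⊆ LONDsets α γ p j ∧
      (LONDsets α γ q j).card ≤ (LONDsets α γ p j).card ∧
      α * γ (j + 1) * (((LONDsets α γ q j).card : ℝ) + 1) ≤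
        α * γ (j + 1) * (((LONDsets α γ p j).card : ℝ) + 1) := by
  intro j hj
  have hsub := LONDsets_subset_of_le hα0 (fun j _ => hγ0 j) hpq j hj
  exact ⟨hsub, card_le_card hsub, LOND_threshold_mono hα0 (hγ0 _) hsub⟩

/-- **LOND is monotone in its input values.** If `p_j ≤ q_j` for all `j ≤ t`, then the
LOND discovery sets satisfy `R_j(q) ⊆ R_j(p)` for every `j ≤ t`; in particular
`|R_j(q)| ≤ |R_j(p)|` and every LOND threshold for the `p`-sequence is at least the
corresponding threshold for the `q`-sequence. -/
theorem LOND_monotone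
    (α : ℝ) (hα0 : 0 ≤ α) (hα1 : α ≤ 1)
    (γ : ℕ → ℝ) (hγ0 : ∀ t, 0 ≤ γ t) (hγ1 : ∑' t : ℕ, γ (t + 1) ≤ 1)
    (t : ℕ) (p q : ℕ → ℝ)
    (hp01 : ∀ j, j ≤ t → p j ∈ Set.Icc (0 : ℝ) 1)
    (hq01 : ∀ j, j ≤ t → q j ∈ Set.Icc (0 : ℝ) 1)
    (hpq : ∀ j, j ≤ t → p j ≤ q j) :
    ∀ j, j ≤ t →
      LONDsets α γ q j ⊆ LONDsets α γ p j ∧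
      (LONDsets α γ q j).card ≤ (LONDsets α γ p j).card ∧
      α * γ (j + 1) * (((LONDsets α γ q j).card : ℝ) + 1) ≤
        α * γ (j + 1) * (((LONDsets α γ p j).card : ℝ) + 1) :=
  LOND_monotone_general α hα0 γ hγ0 t p q hpq
end
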